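/- For any 𝐤∈ℕ[Φ]^W, a weight μ∈P is a sink of →_{sym,𝐤} (i.e. there is no ν with μ→_{sym,𝐤}ν) if and only if μ=η_𝐤(λ) for some λ∈P satisfying ⟨λ,α∨⟩≠−1 for all α∈Φ⁺. -/

import Mathlib

open RealInnerProductSpace Pointwise

noncomputable section

variable {V : Type*} [NormedAddCommGroup V] [InnerProductSpace ℝ V]

/-- The coroot `α∨ = 2α/⟨α,α⟩` associated to a vector `α`. -/
def coroot (α : V) : V := (2 / ⟪α, α⟫) • α

/-- The reflection `s_α(v) = v − ⟨v,α∨⟩α` across the hyperplane orthogonal to `α`. -/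
def sRefl (α : V) (v : V) : V := v - ⟪v, coroot α⟫ • α

/-- An irreducible reduced crystallographic root system in the real inner product
space `V`, together with a chosen set of positive roots and simple roots. -/
structure RootSystemData (V : Type*) [NormedAddCommGroup V] [InnerProductSpace ℝ V] where
  n : ℕ
  roots : Set V
  roots_finite : roots.Finite
  roots_nonzero : (0 : V) ∉ roots
  roots_span : Submodule.span ℝ roots = ⊤
  refl_mem : ∀ α ∈ roots, ∀ β ∈ roots, sRefl α β ∈ roots
  reduced : ∀ α ∈ roots, ∀ c : ℝ, c • α ∈ roots → c • α = α ∨ c • α = -α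
  crystallographic : ∀ α ∈ roots, ∀ β ∈ roots, ∃ m : ℤ, ⟪β, coroot α⟫ = (m : ℝ)
  pos : Set V
  pos_subset : pos ⊆ roots
  pos_union : roots = pos ∪ (-pos)
  simple : Fin n → V
  simple_mem : ∀ i, simple i ∈ pos
  simple_li : LinearIndependent ℝ simple
  simple_span : Submodule.span ℝ (Set.range simple) = ⊤
  pos_combo : ∀ α ∈ pos, ∃ c : Fin n → ℕ, α = ∑ i, (c i : ℝ) • simple i
  irred : ∀ S₁ S₂ : Set V, roots = S₁ ∪ S₂ →
    (∀ α ∈ S₁, ∀ β ∈ S₂, ⟪α, β⟫ = 0) → S₁ = ∅ ∨ S₂ = ∅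

namespace RootSystemData

variable (R : RootSystemData V)

/-- The Weyl group `W`: all finite compositions of reflections in roots. -/
def weyl : Set (V → V) :=
  {w | ∃ l : List V, (∀ α ∈ l, α ∈ R.roots) ∧ w = (l.map sRefl).foldr (· ∘ ·) id}

/-- The orbit `W(v)` of a vector under the Weyl group. -/
def orbit (v : V) : Set V := {u | ∃ w ∈ R.weyl, u = w v}

/-- The weight lattice `P`. -/
def weightLattice : Set V :=
  {v | ∀ α ∈ R.roots, ∃ m : ℤ, ⟪v, coroot α⟫ = (m : ℝ)}

/-- The permutohedron `Π(v) = ConvexHull W(v)`. -/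
def perm (v : V) : Set V := convexHull ℝ (R.orbit v)

/-- The discrete permutohedron `Π^Q(λ) = Π(λ) ∩ (Q+λ)`. -/
def permQ (lam : V) : Set V :=
  R.perm lam ∩ {v | v - lam ∈ Submodule.span ℤ R.roots}

/-- Dominance: nonnegative pairing with all simple coroots. -/
def IsDominant (v : V) : Prop := ∀ i, 0 ≤ ⟪v, coroot (R.simple i)⟫

/-- `W`-invariance of a function `𝐤 : Φ → ℕ`. -/
def IsWInvariant (k : V → ℕ) : Prop := ∀ w ∈ R.weyl, ∀ α ∈ R.roots, k (w α) = k α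

/-- Symmetric interval-firing: `λ → λ+α` for `α ∈ Φ⁺` whenever
`⟨λ,α∨⟩+1 ∈ {−𝐤(α),…,𝐤(α)}`. -/
def symFire (k : V → ℕ) (lam mu : V) : Prop :=
  lam ∈ R.weightLattice ∧ ∃ α ∈ R.pos, mu = lam + α ∧
    -(k α : ℝ) ≤ ⟪lam, coroot α⟫ + 1 ∧ ⟪lam, coroot α⟫ + 1 ≤ (k α : ℝ)

/-- Truncated interval-firing: `λ → λ+α` for `α ∈ Φ⁺` whenever
`⟨λ,α∨⟩+1 ∈ {−𝐤(α)+1,…,𝐤(α)}`. -/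
def trFire (k : V → ℕ) (lam mu : V) : Prop :=
  lam ∈ R.weightLattice ∧ ∃ α ∈ R.pos, mu = lam + α ∧
    -(k α : ℝ) + 1 ≤ ⟪lam, coroot α⟫ + 1 ∧ ⟪lam, coroot α⟫ + 1 ≤ (k α : ℝ)

/-- All roots have the same length. -/
def SimplyLaced : Prop := ∀ α ∈ R.roots, ∀ β ∈ R.roots, ‖α‖ = ‖β‖

/-- A root of maximal length. -/
def IsLongRoot (α : V) : Prop := α ∈ R.roots ∧ ∀ β ∈ R.roots, ‖β‖ ≤ ‖α‖

/-- A root which is not of maximal length. -/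
def IsShortRoot (α : V) : Prop := α ∈ R.roots ∧ ¬ R.IsLongRoot α

/-- `𝐤` is good: either `Φ` is simply laced, or `𝐤` vanishing on short roots
implies `𝐤` vanishing on all (in particular long) roots. -/
def IsGood (k : V → ℕ) : Prop :=
  R.SimplyLaced ∨ ((∀ α, R.IsShortRoot α → k α = 0) → ∀ β ∈ R.roots, k β = 0)

/-- The product of the simple reflections indexed by a word. -/
def wordProd (l : List (Fin R.n)) : V → V :=
  (l.map (fun i => sRefl (R.simple i))).foldr (· ∘ ·) id

/-- Coxeter length: the minimal length of a word in the simple reflections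
expressing `w`. -/
def coxLen (w : V → V) : ℕ :=
  sInf {m : ℕ | ∃ l : List (Fin R.n), l.length = m ∧ w = R.wordProd l}

/-- The parabolic subgroup `W_I`: all compositions of simple reflections `s_{αᵢ}`, `i ∈ I`. -/
def weylI (I : Set (Fin R.n)) : Set (V → V) :=
  {w | ∃ l : List (Fin R.n), (∀ i ∈ l, i ∈ I) ∧ w = R.wordProd l}

/-- The orbit `W_I(v)`. -/
def orbitI (I : Set (Fin R.n)) (v : V) : Set V := {u | ∃ w ∈ R.weylI I, u = w v}

/-- The discrete parabolic permutohedron `Π^Q_I(λ)`. -/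
def permQI (I : Set (Fin R.n)) (lam : V) : Set V :=
  convexHull ℝ (R.orbitI I lam) ∩ {v | v - lam ∈ Submodule.span ℤ R.roots}

/-- Given a choice `dm` of dominant representatives, `I^{0,1}_λ` is the set of
indices `i` with `⟨λ_dom, αᵢ∨⟩ ∈ {0,1}`. -/
def I01 (dm : V → V) (lam : V) : Set (Fin R.n) :=
  {i | ⟪dm lam, coroot (R.simple i)⟫ = 0 ∨ ⟪dm lam, coroot (R.simple i)⟫ = 1}

/-- The minimal length of an `α`-traverse in `Π^Q(λ)`. -/
def traverseLen (lam α : V) : ℕ :=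
  sInf {ℓ : ℕ | ∃ mu : V, (∀ i : ℕ, i ≤ ℓ → mu - (i : ℝ) • α ∈ R.permQ lam) ∧
    mu + α ∉ R.permQ lam ∧ mu - ((ℓ : ℝ) + 1) • α ∉ R.permQ lam}

/-- `m_λ(α) = min {cᵢ : αᵢ ∈ W(α)}` where `λ = Σ cᵢ ωᵢ` is dominant,
i.e. `cᵢ = ⟨λ, αᵢ∨⟩`. -/
def mVal (lam α : V) : ℕ :=
  sInf {c : ℕ | ∃ i, R.simple i ∈ R.orbit α ∧ (c : ℝ) = ⟪lam, coroot (R.simple i)⟫}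

/-- Funny weights (only exist when `Φ` is not simply laced). -/
def IsFunny (lam : V) : Prop :=
  ¬ R.SimplyLaced ∧ ∃ l s : Fin R.n, R.IsLongRoot (R.simple l) ∧ R.IsShortRoot (R.simple s) ∧
    ⟪R.simple l, coroot (R.simple s)⟫ ≠ 0 ∧
    ⟪lam, coroot (R.simple s)⟫ = 0 ∧ 1 ≤ ⟪lam, coroot (R.simple l)⟫ ∧
    ∀ i, R.IsLongRoot (R.simple i) → ⟪lam, coroot (R.simple l)⟫ ≤ ⟪lam, coroot (R.simple i)⟫

end RootSystemData

/-- The map `η_𝐤(λ) = λ + w_λ(ρ_𝐤)`, relative to a choice `fw` of fundamental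
weights and a choice `wl` of minimal-length Weyl elements `λ ↦ w_λ`. -/
def etaMap (R : RootSystemData V) (fw : Fin R.n → V) (wl : V → V → V)
    (k : V → ℕ) (lam : V) : V :=
  lam + wl lam (∑ i, (k (R.simple i) : ℝ) • fw i)

/-- Two points are in the same connected component of a relation if they are
related by its reflexive-transitive-symmetric closure. -/
def SameComponent (r : V → V → Prop) (x y : V) : Prop :=
  Relation.ReflTransGen (fun a b => r a b ∨ r b a) x y

/-!
Write `μ = w δ` with `δ` dominant and `w` of minimal length. Minimality makes `⟨δ, αᵢ∨⟩ > 0`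
for every simple root `αᵢ` that `w` sends to a negative root, and for dominant `x` any lower
bound `⟨x, αᵢ∨⟩ ≥ c` on these simple inversions propagates, by induction on height, to all
inversions `γ` of `w`.

If `μ = η_𝐤(λ) = w_λ (λ_dom + ρ_𝐤)` and no `⟨λ, α∨⟩` equals `-1`, the inversions of `w_λ`
satisfy `⟨λ_dom, γ∨⟩ ≥ 2`; together with `⟨ρ_𝐤, γ∨⟩ ≥ 𝐤(γ)` this puts every `⟨μ, α∨⟩ + 1`
outside `[-𝐤(α), 𝐤(α)]`. Conversely, at a sink `μ = w δ`, the impossibility of firing along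
`± w αᵢ` gives `⟨δ - ρ_𝐤, αᵢ∨⟩ ≥ 0`, and `≥ 2` on simple inversions. Then `λ := w (δ - ρ_𝐤)`
has no pairing `-1`, `λ_dom = δ - ρ_𝐤`, and `w` is the minimal element `w_λ` (two elements
carrying `λ_dom` to `λ` without inversions orthogonal to `λ_dom` coincide), so `η_𝐤(λ) = μ`.
-/

lemma coroot_neg (α : V) : coroot (-α) = -coroot α := by
  simp [coroot]

lemma inner_coroot_eq (x α : V) : ⟪x, coroot α⟫ = 2 / ⟪α, α⟫ * ⟪x, α⟫ :=
  real_inner_smul_right _ _ _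

lemma inner_coroot_nonneg_iff {x α : V} (hα : α ≠ 0) : 0 ≤ ⟪x, coroot α⟫ ↔ 0 ≤ ⟪x, α⟫ := by
  rw [inner_coroot_eq]
  exact mul_nonneg_iff_of_pos_left (div_pos two_pos (real_inner_self_pos.2 hα))

lemma inner_self_coroot {α : V} (h : α ≠ 0) : ⟪α, coroot α⟫ = 2 := by
  have : ⟪α, α⟫ ≠ 0 := (real_inner_self_pos.2 h).ne'
  rw [inner_coroot_eq]
  field_simp

lemma sRefl_self {α : V} (h : α ≠ 0) : sRefl α α = -α := by
  rw [sRefl, inner_self_coroot h]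
  module

lemma sRefl_sRefl (α v : V) : sRefl α (sRefl α v) = v := by
  rcases eq_or_ne α 0 with rfl | h
  · simp [sRefl]
  · simp only [sRefl, inner_sub_left, real_inner_smul_left, inner_self_coroot h]
    module

lemma sRefl_neg (α v : V) : sRefl (-α) v = sRefl α v := by
  simp [sRefl, coroot_neg]

lemma sRefl_eq_self {α x : V} (h : ⟪x, coroot α⟫ = 0) : sRefl α x = x := by
  simp [sRefl, h]

lemma inner_sRefl_sRefl (α u v : V) : ⟪sRefl α u, sRefl α v⟫ = ⟪u, v⟫ := by
  rcases eq_or_ne α 0 with rfl | h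
  · simp [sRefl]
  · have : ⟪α, α⟫ ≠ 0 := (real_inner_self_pos.2 h).ne'
    simp only [sRefl, coroot, inner_sub_left, inner_sub_right, real_inner_smul_left,
      real_inner_smul_right, real_inner_comm α u, real_inner_comm α v]
    field_simp
    ring

def sReflEquiv (α : V) : V ≃ₗᵢ[ℝ] V :=
  LinearEquiv.isometryOfInner
    (LinearEquiv.ofInvolutive
      { toFun := sRefl α
        map_add' := fun u v => by
          simp only [sRefl, inner_add_left, add_smul]
          abel
        map_smul' := fun c v => by
          simp only [sRefl, real_inner_smul_left, smul_sub, mul_smul, RingHom.id_apply] }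
      (sRefl_sRefl α))
    (inner_sRefl_sRefl α)

@[simp]
lemma coe_sReflEquiv (α : V) : ⇑(sReflEquiv α) = sRefl α := rfl

lemma coroot_map (e : V ≃ₗᵢ[ℝ] V) (α : V) : coroot (e α) = e (coroot α) := by
  rw [coroot, coroot, e.inner_map_map, map_smul]

lemma inner_map_coroot_map (e : V ≃ₗᵢ[ℝ] V) (x α : V) :
    ⟪e x, coroot (e α)⟫ = ⟪x, coroot α⟫ := by
  rw [coroot_map, e.inner_map_map]

lemma map_sRefl (e : V ≃ₗᵢ[ℝ] V) (α x : V) : e (sRefl α x) = sRefl (e α) (e x) := by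
  rw [sRefl, sRefl, map_sub, map_smul, inner_map_coroot_map]

lemma inner_coroot_sRefl (x α γ : V) :
    ⟪x, coroot (sRefl α γ)⟫ = ⟪x, coroot γ⟫ - ⟪α, coroot γ⟫ * ⟪x, coroot α⟫ := by
  rw [← coe_sReflEquiv, coroot_map, coe_sReflEquiv, sRefl, inner_sub_right,
    real_inner_smul_right]
  simp only [coroot, real_inner_smul_left, real_inner_smul_right, real_inner_comm γ α]
  ring

lemma inner_coroot_pos_comm {x y : V} (h : 0 < ⟪x, coroot y⟫) : 0 < ⟪y, coroot x⟫ := by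
  rw [inner_coroot_eq] at h ⊢
  have hy : 0 < ⟪y, y⟫ := by
    rcases (real_inner_self_nonneg (x := y)).lt_or_eq with hy | hy
    · exact hy
    · rw [← hy, div_zero, zero_mul] at h
      exact absurd h (lt_irrefl 0)
  have hxy : 0 < ⟪x, y⟫ := pos_of_mul_pos_right h (by positivity)
  have hx : 0 < ⟪x, x⟫ := real_inner_self_pos.2 fun hx => by simp [hx] at hxy
  exact mul_pos (by positivity) (by rwa [real_inner_comm])

lemma inner_coroot_sRefl_self (α γ : V) (hα : α ≠ 0) :
    ⟪α, coroot (sRefl α γ)⟫ = -⟪α, coroot γ⟫ := by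
  rw [inner_coroot_sRefl, inner_self_coroot hα]
  ring

lemma foldr_sRefl_eq_prod (l : List V) :
    (l.map sRefl).foldr (· ∘ ·) id = ⇑(l.map sReflEquiv).prod := by
  induction l with
  | nil => rfl
  | cons a t ih => simp [ih]

lemma sReflEquiv_inv (α : V) : (sReflEquiv α)⁻¹ = sReflEquiv α :=
  inv_eq_of_mul_eq_one_right (LinearIsometryEquiv.ext (sRefl_sRefl α))

namespace RootSystemData

variable (R : RootSystemData V)

lemma ne_zero_of_mem_roots {β : V} (h : β ∈ R.roots) : β ≠ 0 :=
  fun h0 => R.roots_nonzero (h0 ▸ h)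

lemma simple_mem_roots (i : Fin R.n) : R.simple i ∈ R.roots :=
  R.pos_subset (R.simple_mem i)

lemma mem_pos_or_neg_mem_pos {β : V} (h : β ∈ R.roots) : β ∈ R.pos ∨ -β ∈ R.pos := by
  rw [R.pos_union] at h
  exact h.imp id Set.mem_neg.1

def simpleBasis : Module.Basis (Fin R.n) ℝ V :=
  Module.Basis.mk R.simple_li R.simple_span.ge

lemma simpleBasis_apply (i : Fin R.n) : R.simpleBasis i = R.simple i :=
  Module.Basis.mk_apply _ _ i

lemma simpleBasis_repr_simple (i j : Fin R.n) :
    R.simpleBasis.repr (R.simple i) j = if i = j then 1 else 0 := by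
  rw [← R.simpleBasis_apply, R.simpleBasis.repr_self, Finsupp.single_apply]

lemma simpleBasis_repr_nonneg {γ : V} (h : γ ∈ R.pos) (j : Fin R.n) :
    0 ≤ R.simpleBasis.repr γ j := by
  obtain ⟨c, rfl⟩ := R.pos_combo γ h
  simp only [map_sum, map_smul, Finsupp.coe_finsetSum, Finsupp.coe_smul, Finset.sum_apply,
    Pi.smul_apply, smul_eq_mul, simpleBasis_repr_simple, mul_ite, mul_one, mul_zero,
    Finset.sum_ite_eq', Finset.mem_univ, if_true]
  positivity

lemma eq_zero_of_simpleBasis_repr_nonneg {v : V} (h : ∀ j, 0 ≤ R.simpleBasis.repr v j)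
    (h' : ∀ j, 0 ≤ R.simpleBasis.repr (-v) j) : v = 0 := by
  refine R.simpleBasis.repr.map_eq_zero_iff.1 (Finsupp.ext fun j => ?_)
  rw [Finsupp.coe_zero, Pi.zero_apply]
  have := h' j
  simp only [map_neg, Finsupp.coe_neg, Pi.neg_apply] at this
  exact le_antisymm (by linarith) (h j)

lemma neg_notMem_pos {β : V} (h : β ∈ R.pos) : -β ∉ R.pos := fun h' =>
  R.ne_zero_of_mem_roots (R.pos_subset h)
    (R.eq_zero_of_simpleBasis_repr_nonneg (R.simpleBasis_repr_nonneg h)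
      (R.simpleBasis_repr_nonneg h'))

lemma neg_mem_pos_of_neg_add_smul_mem_pos {a b : V} {c : ℝ} (ha : a ∈ R.pos)
    (hb : b ∈ R.roots) (hc : 0 < c) (h : -(a + c • b) ∈ R.pos) : -b ∈ R.pos := by
  refine (R.mem_pos_or_neg_mem_pos hb).resolve_left fun hb' => ?_
  have hsum : ∀ j, 0 ≤ R.simpleBasis.repr (a + c • b) j := fun j => by
    simp only [map_add, map_smul, Finsupp.coe_add, Finsupp.coe_smul, Pi.add_apply,
      Pi.smul_apply, smul_eq_mul]
    have := R.simpleBasis_repr_nonneg hb' j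
    nlinarith [R.simpleBasis_repr_nonneg ha j]
  have h0 := R.eq_zero_of_simpleBasis_repr_nonneg hsum (R.simpleBasis_repr_nonneg h)
  exact R.roots_nonzero (by simpa [h0] using R.pos_subset h)

lemma sRefl_simple_mem_pos {γ : V} (hγ : γ ∈ R.pos) {i : Fin R.n} (hne : γ ≠ R.simple i) :
    sRefl (R.simple i) γ ∈ R.pos := by
  have hγr := R.pos_subset hγ
  by_cases hex : ∃ j, j ≠ i ∧ R.simpleBasis.repr γ j ≠ 0
  · obtain ⟨j, hji, hj⟩ := hex
    refine (R.mem_pos_or_neg_mem_pos (R.refl_mem _ (R.simple_mem_roots i) _ hγr)).resolve_right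
      fun hneg => ?_
    have h1 := R.simpleBasis_repr_nonneg hneg j
    simp only [sRefl, neg_sub, map_sub, map_smul, Finsupp.coe_sub, Finsupp.coe_smul,
      Pi.sub_apply, Pi.smul_apply, smul_eq_mul, simpleBasis_repr_simple, if_neg hji.symm,
      mul_zero, zero_sub] at h1
    exact hj (le_antisymm (by linarith) (R.simpleBasis_repr_nonneg hγ j))
  · push Not at hex
    have hγi : R.simpleBasis.repr γ i • R.simple i = γ := by
      conv_rhs => rw [← R.simpleBasis.sum_repr γ]
      rw [Finset.sum_eq_single i (fun j _ hj => by rw [hex j hj, zero_smul]) (by simp),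
        simpleBasis_apply]
    rcases R.reduced _ (R.simple_mem_roots i) _ (hγi ▸ hγr) with h | h
    · exact absurd (hγi.symm.trans h) hne
    · exact absurd (by rw [← hγi, h, neg_neg]; exact R.simple_mem i) (R.neg_notMem_pos hγ)

def height (v : V) : ℝ := ∑ j, R.simpleBasis.repr v j

lemma height_pos {γ : V} (hγ : γ ∈ R.pos) : 0 < R.height γ := by
  refine (Finset.sum_nonneg fun j _ => R.simpleBasis_repr_nonneg hγ j).lt_of_ne fun h => ?_
  refine R.ne_zero_of_mem_roots (R.pos_subset hγ) (R.eq_zero_of_simpleBasis_repr_nonneg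
    (R.simpleBasis_repr_nonneg hγ) fun j => ?_)
  have := (Finset.sum_eq_zero_iff_of_nonneg fun j _ => R.simpleBasis_repr_nonneg hγ j).1
    h.symm j (Finset.mem_univ j)
  simp [this]

lemma height_sRefl_simple (γ : V) (i : Fin R.n) :
    R.height (sRefl (R.simple i) γ) = R.height γ - ⟪γ, coroot (R.simple i)⟫ := by
  simp only [height, sRefl, map_sub, map_smul, Finsupp.coe_sub, Finsupp.coe_smul, Pi.sub_apply,
    Pi.smul_apply, smul_eq_mul, simpleBasis_repr_simple, Finset.sum_sub_distrib, mul_ite,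
    mul_one, mul_zero, Finset.sum_ite_eq, Finset.mem_univ, if_true]

lemma exists_one_le_inner_coroot_simple {γ : V} (hγ : γ ∈ R.pos) :
    ∃ i, 1 ≤ ⟪γ, coroot (R.simple i)⟫ := by
  obtain ⟨c, hc⟩ := R.pos_combo γ hγ
  have hpos : 0 < ⟪γ, γ⟫ := real_inner_self_pos.2 (R.ne_zero_of_mem_roots (R.pos_subset hγ))
  have hsum : ∑ _i : Fin R.n, (0 : ℝ) < ∑ i, (c i : ℝ) * ⟪γ, R.simple i⟫ := by
    rw [Finset.sum_const_zero]
    convert hpos using 1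
    conv_rhs => arg 2; rw [hc]
    rw [sum_inner]
    exact Finset.sum_congr rfl fun i _ => by rw [real_inner_smul_left, real_inner_comm]
  obtain ⟨i, -, hi⟩ := Finset.exists_lt_of_sum_lt hsum
  have hαi : 0 < ⟪R.simple i, R.simple i⟫ :=
    real_inner_self_pos.2 (R.ne_zero_of_mem_roots (R.simple_mem_roots i))
  have hpair : 0 < ⟪γ, coroot (R.simple i)⟫ := by
    rw [inner_coroot_eq]
    have := pos_of_mul_pos_right hi (Nat.cast_nonneg _)
    positivity
  obtain ⟨m, hm⟩ := R.crystallographic _ (R.simple_mem_roots i) _ (R.pos_subset hγ)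
  rw [hm] at hpair
  exact ⟨i, hm ▸ by exact_mod_cast Int.cast_pos.1 hpair⟩

lemma pos_induction (Q : V → Prop) (simple : ∀ i, Q (R.simple i))
    (step : ∀ γ ∈ R.pos, ∀ i, 1 ≤ ⟪γ, coroot (R.simple i)⟫ →
      sRefl (R.simple i) γ ∈ R.pos → Q (sRefl (R.simple i) γ) → Q γ) :
    ∀ γ ∈ R.pos, Q γ := by
  suffices h : ∀ N : ℕ, ∀ γ ∈ R.pos, R.height γ ≤ N → Q γ from
    fun γ hγ => h _ γ hγ (Nat.le_ceil _)
  intro N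
  induction N with
  | zero => exact fun γ hγ hle => absurd hle (by simpa using R.height_pos hγ)
  | succ N ih =>
    intro γ hγ hle
    by_cases hs : ∃ i, γ = R.simple i
    · obtain ⟨i, rfl⟩ := hs
      exact simple i
    · push Not at hs
      obtain ⟨i, hi⟩ := R.exists_one_le_inner_coroot_simple hγ
      have hmem := R.sRefl_simple_mem_pos hγ (hs i)
      refine step γ hγ i hi hmem (ih _ hmem ?_)
      rw [R.height_sRefl_simple]
      push_cast at hle
      linarith

lemma inner_simple_coroot_sRefl_le_neg_one {γ : V} (hγ : γ ∈ R.roots) {i : Fin R.n}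
    (hi : 0 < ⟪γ, coroot (R.simple i)⟫) :
    ⟪R.simple i, coroot (sRefl (R.simple i) γ)⟫ ≤ -1 := by
  rw [inner_coroot_sRefl_self _ _ (R.ne_zero_of_mem_roots (R.simple_mem_roots i))]
  have hpos := inner_coroot_pos_comm hi
  obtain ⟨m, hm⟩ := R.crystallographic _ hγ _ (R.simple_mem_roots i)
  rw [hm] at hpos ⊢
  have : (1 : ℤ) ≤ m := Int.cast_pos.1 hpos
  exact_mod_cast neg_le_neg this

lemma exists_linearIsometryEquiv_of_mem_weyl {w : V → V} (hw : w ∈ R.weyl) :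
    ∃ e : V ≃ₗᵢ[ℝ] V, ⇑e = w := by
  obtain ⟨l, -, rfl⟩ := hw
  exact ⟨_, (foldr_sRefl_eq_prod l).symm⟩

variable {R}

lemma map_add_of_mem_weyl {w : V → V} (hw : w ∈ R.weyl) (x y : V) : w (x + y) = w x + w y := by
  obtain ⟨e, rfl⟩ := R.exists_linearIsometryEquiv_of_mem_weyl hw
  exact map_add e x y

lemma map_smul_of_mem_weyl {w : V → V} (hw : w ∈ R.weyl) (c : ℝ) (x : V) :
    w (c • x) = c • w x := by
  obtain ⟨e, rfl⟩ := R.exists_linearIsometryEquiv_of_mem_weyl hw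
  exact map_smul e c x

lemma map_neg_of_mem_weyl {w : V → V} (hw : w ∈ R.weyl) (x : V) : w (-x) = -w x := by
  obtain ⟨e, rfl⟩ := R.exists_linearIsometryEquiv_of_mem_weyl hw
  exact map_neg e x

lemma inner_map_coroot_map_of_mem_weyl {w : V → V} (hw : w ∈ R.weyl) (x y : V) :
    ⟪w x, coroot (w y)⟫ = ⟪x, coroot y⟫ := by
  obtain ⟨e, rfl⟩ := R.exists_linearIsometryEquiv_of_mem_weyl hw
  exact inner_map_coroot_map e x y

lemma map_sRefl_of_mem_weyl {w : V → V} (hw : w ∈ R.weyl) (α x : V) :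
    w (sRefl α x) = sRefl (w α) (w x) := by
  obtain ⟨e, rfl⟩ := R.exists_linearIsometryEquiv_of_mem_weyl hw
  exact map_sRefl e α x

lemma apply_mem_roots {w : V → V} (hw : w ∈ R.weyl) {β : V} (hβ : β ∈ R.roots) :
    w β ∈ R.roots := by
  obtain ⟨l, hl, rfl⟩ := hw
  induction l with
  | nil => exact hβ
  | cons a t ih =>
    exact R.refl_mem a (hl a (by simp)) _ (ih fun α hα => hl α (by simp [hα]))

variable (R)

lemma sRefl_mem_weyl {β : V} (h : β ∈ R.roots) : sRefl β ∈ R.weyl :=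
  ⟨[β], by simpa using h, rfl⟩

variable {R}

lemma comp_mem_weyl {w w' : V → V} (h : w ∈ R.weyl) (h' : w' ∈ R.weyl) : w ∘ w' ∈ R.weyl := by
  obtain ⟨l, hl, rfl⟩ := h
  obtain ⟨l', hl', rfl⟩ := h'
  refine ⟨l ++ l', fun α hα => (List.mem_append.1 hα).elim (hl α) (hl' α), ?_⟩
  rw [foldr_sRefl_eq_prod, foldr_sRefl_eq_prod, foldr_sRefl_eq_prod, List.map_append,
    List.prod_append, LinearIsometryEquiv.coe_mul]

lemma exists_inverse_mem_weyl {w : V → V} (h : w ∈ R.weyl) :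
    ∃ w' ∈ R.weyl, (∀ x, w (w' x) = x) ∧ ∀ x, w' (w x) = x := by
  obtain ⟨l, hl, rfl⟩ := h
  have hinv : (l.reverse.map sReflEquiv).prod = (l.map sReflEquiv).prod⁻¹ := by
    simp [List.prod_inv_reverse, sReflEquiv_inv, Function.comp_def, List.map_reverse]
  refine ⟨_, ⟨l.reverse, fun α hα => hl α (List.mem_reverse.1 hα), rfl⟩, fun x => ?_,
    fun x => ?_⟩ <;>
  simp only [foldr_sRefl_eq_prod, hinv, LinearIsometryEquiv.coe_inv,
    LinearIsometryEquiv.apply_symm_apply, LinearIsometryEquiv.symm_apply_apply]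

variable (R)

lemma wordProd_cons (i : Fin R.n) (l : List (Fin R.n)) :
    R.wordProd (i :: l) = sRefl (R.simple i) ∘ R.wordProd l := rfl

lemma wordProd_append (l₁ l₂ : List (Fin R.n)) :
    R.wordProd (l₁ ++ l₂) = R.wordProd l₁ ∘ R.wordProd l₂ := by
  induction l₁ with
  | nil => rfl
  | cons a t ih => rw [List.cons_append, wordProd_cons, wordProd_cons, ih]; rfl

lemma wordProd_concat (l : List (Fin R.n)) (j : Fin R.n) :
    R.wordProd (l ++ [j]) = R.wordProd l ∘ sRefl (R.simple j) :=
  R.wordProd_append l [j]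

lemma wordProd_mem_weyl (l : List (Fin R.n)) : R.wordProd l ∈ R.weyl :=
  ⟨l.map R.simple, by simpa using fun i _ => R.simple_mem_roots i,
    by simp [wordProd, Function.comp_def]⟩

lemma exists_wordProd_eq_sRefl {β : V} (hβ : β ∈ R.roots) : ∃ l, R.wordProd l = sRefl β := by
  have hpos : ∀ γ ∈ R.pos, ∃ l, R.wordProd l = sRefl γ := by
    refine R.pos_induction _ (fun i => ⟨[i], rfl⟩) fun γ _ i _ _ ⟨l, hl⟩ => ⟨i :: l ++ [i], ?_⟩
    funext x
    have hi := R.sRefl_mem_weyl (R.simple_mem_roots i)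
    rw [wordProd_concat, wordProd_cons, hl]
    simp only [Function.comp_apply]
    rw [map_sRefl_of_mem_weyl hi, sRefl_sRefl, sRefl_sRefl]
  rcases R.mem_pos_or_neg_mem_pos hβ with h | h
  · exact hpos β h
  · obtain ⟨l, hl⟩ := hpos _ h
    exact ⟨l, by rw [hl]; funext x; exact sRefl_neg β x⟩

lemma exists_wordProd_eq {w : V → V} (hw : w ∈ R.weyl) : ∃ l, R.wordProd l = w := by
  obtain ⟨l, hl, rfl⟩ := hw
  induction l with
  | nil => exact ⟨[], rfl⟩
  | cons a t ih =>
    obtain ⟨l₁, hl₁⟩ := ih fun α hα => hl α (by simp [hα])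
    obtain ⟨l₂, hl₂⟩ := R.exists_wordProd_eq_sRefl (hl a (by simp))
    exact ⟨l₂ ++ l₁, by rw [wordProd_append, hl₁, hl₂]; rfl⟩

lemma exists_wordProd_length_eq_coxLen {w : V → V} (hw : w ∈ R.weyl) :
    ∃ l, l.length = R.coxLen w ∧ R.wordProd l = w := by
  obtain ⟨l, hl⟩ := R.exists_wordProd_eq hw
  obtain ⟨l', hl', hw'⟩ := Nat.sInf_mem (s := {m | ∃ l, l.length = m ∧ w = R.wordProd l})
    ⟨l.length, l, rfl, hl.symm⟩
  exact ⟨l', hl', hw'.symm⟩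

lemma coxLen_le_length {w : V → V} {l : List (Fin R.n)} (h : R.wordProd l = w) :
    R.coxLen w ≤ l.length :=
  Nat.sInf_le ⟨l, rfl, h.symm⟩

/-- The exchange property. -/
lemma exists_wordProd_comp_sRefl_eq (l : List (Fin R.n)) {j : Fin R.n}
    (h : -R.wordProd l (R.simple j) ∈ R.pos) :
    ∃ l', l'.length + 1 = l.length ∧ R.wordProd l' = R.wordProd l ∘ sRefl (R.simple j) := by
  induction l with
  | nil => exact absurd h (R.neg_notMem_pos (R.simple_mem j))
  | cons i t ih =>
    rcases R.mem_pos_or_neg_mem_pos (apply_mem_roots (R.wordProd_mem_weyl t)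
      (R.simple_mem_roots j)) with hpos | hneg
    · have hij : R.wordProd t (R.simple j) = R.simple i := by
        by_contra hne
        exact R.neg_notMem_pos (R.sRefl_simple_mem_pos hpos hne) h
      refine ⟨t, rfl, funext fun x => ?_⟩
      simp only [wordProd_cons, Function.comp_apply]
      rw [map_sRefl_of_mem_weyl (R.wordProd_mem_weyl t), hij, sRefl_sRefl]
    · obtain ⟨t', ht', heq⟩ := ih hneg
      exact ⟨i :: t', by simp [ht'], by rw [wordProd_cons, wordProd_cons, heq]; rfl⟩

lemma coxLen_comp_sRefl_lt {w : V → V} (hw : w ∈ R.weyl) {j : Fin R.n}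
    (h : -w (R.simple j) ∈ R.pos) : R.coxLen (w ∘ sRefl (R.simple j)) < R.coxLen w := by
  obtain ⟨l, hlen, rfl⟩ := R.exists_wordProd_length_eq_coxLen hw
  obtain ⟨l', hl', heq⟩ := R.exists_wordProd_comp_sRefl_eq l h
  have := R.coxLen_le_length heq
  omega

lemma eq_id_of_forall_simple_mem_pos {w : V → V} (hw : w ∈ R.weyl)
    (h : ∀ j, w (R.simple j) ∈ R.pos) : w = id := by
  obtain ⟨l, hlen, rfl⟩ := R.exists_wordProd_length_eq_coxLen hw
  rcases List.eq_nil_or_concat l with rfl | ⟨t, j, rfl⟩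
  · rfl
  · have hneg : -R.wordProd t (R.simple j) ∈ R.pos := by
      have := h j
      rwa [List.concat_eq_append, wordProd_concat, Function.comp_apply,
        sRefl_self (R.ne_zero_of_mem_roots (R.simple_mem_roots j)),
        map_neg_of_mem_weyl (R.wordProd_mem_weyl t)] at this
    obtain ⟨t', ht', heq⟩ := R.exists_wordProd_comp_sRefl_eq t hneg
    have := R.coxLen_le_length (heq.trans (R.wordProd_concat t j).symm)
    simp only [List.concat_eq_append, List.length_append, List.length_singleton] at hlen
    omega

variable {R}

lemma exists_apply_eq_of_mem_roots {w : V → V} (hw : w ∈ R.weyl) {α : V} (hα : α ∈ R.roots) :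
    ∃ β ∈ R.roots, w β = α := by
  obtain ⟨w', hw', hww', -⟩ := exists_inverse_mem_weyl hw
  exact ⟨w' α, apply_mem_roots hw' hα, hww' α⟩

lemma inner_coroot_nonneg_of_isDominant {x : V} (hx : R.IsDominant x) {γ : V}
    (hγ : γ ∈ R.pos) : 0 ≤ ⟪x, coroot γ⟫ := by
  rw [inner_coroot_nonneg_iff (R.ne_zero_of_mem_roots (R.pos_subset hγ))]
  obtain ⟨c, rfl⟩ := R.pos_combo γ hγ
  rw [inner_sum]
  refine Finset.sum_nonneg fun i _ => ?_
  rw [real_inner_smul_right]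
  exact mul_nonneg (Nat.cast_nonneg _)
    ((inner_coroot_nonneg_iff (R.ne_zero_of_mem_roots (R.simple_mem_roots i))).1 (hx i))

lemma apply_eq_self_of_isDominant {w : V → V} (hw : w ∈ R.weyl) {x : V} (hx : R.IsDominant x)
    (hwx : R.IsDominant (w x)) : w x = x := by
  induction hN : R.coxLen w using Nat.strong_induction_on generalizing w with
  | _ N ih =>
  by_cases hpos : ∀ j, w (R.simple j) ∈ R.pos
  · rw [R.eq_id_of_forall_simple_mem_pos hw hpos, id]
  push Not at hpos
  obtain ⟨j, hj⟩ := hpos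
  have hneg :=
    (R.mem_pos_or_neg_mem_pos (apply_mem_roots hw (R.simple_mem_roots j))).resolve_left hj
  have hfix : sRefl (R.simple j) x = x := by
    refine sRefl_eq_self (le_antisymm ?_ (hx j))
    have := inner_coroot_nonneg_of_isDominant hwx hneg
    rwa [coroot_neg, inner_neg_right, inner_map_coroot_map_of_mem_weyl hw, neg_nonneg] at this
  have hws := comp_mem_weyl hw (R.sRefl_mem_weyl (R.simple_mem_roots j))
  have hwx' : (w ∘ sRefl (R.simple j)) x = w x := by rw [Function.comp_apply, hfix]
  rw [← hwx', ih _ (hN ▸ R.coxLen_comp_sRefl_lt hw hneg) hws (hwx' ▸ hwx) rfl]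

lemma inner_coroot_simple_ne_zero_of_minimal {w : V → V} (hw : w ∈ R.weyl) {x : V}
    (hmin : ∀ w' ∈ R.weyl, w' x = w x → R.coxLen w ≤ R.coxLen w') {j : Fin R.n}
    (hj : -w (R.simple j) ∈ R.pos) : ⟪x, coroot (R.simple j)⟫ ≠ 0 := fun h0 =>
  (R.coxLen_comp_sRefl_lt hw hj).not_ge <|
    hmin _ (comp_mem_weyl hw (R.sRefl_mem_weyl (R.simple_mem_roots j)))
      (by rw [Function.comp_apply, sRefl_eq_self h0])

/-- Induction on the height of `γ`: when `sᵢγ` is not itself an inversion, `αᵢ` is one. -/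
lemma le_inner_coroot_of_inversion {w : V → V} (hw : w ∈ R.weyl) {x : V}
    (hx : R.IsDominant x) {c : ℝ}
    (hsimple : ∀ j, -w (R.simple j) ∈ R.pos → c ≤ ⟪x, coroot (R.simple j)⟫) :
    ∀ γ ∈ R.pos, -w γ ∈ R.pos → c ≤ ⟪x, coroot γ⟫ := by
  refine R.pos_induction _ hsimple fun γ hγ i hi hmem ih hneg => ?_
  have ht := R.inner_simple_coroot_sRefl_le_neg_one (R.pos_subset hγ) (by linarith)
  have hγ' : ⟪x, coroot γ⟫ = ⟪x, coroot (sRefl (R.simple i) γ)⟫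
      - ⟪R.simple i, coroot (sRefl (R.simple i) γ)⟫ * ⟪x, coroot (R.simple i)⟫ := by
    conv_lhs => rw [← sRefl_sRefl (R.simple i) γ]
    exact inner_coroot_sRefl _ _ _
  have ha := inner_coroot_nonneg_of_isDominant hx hmem
  have hb := hx i
  rcases R.mem_pos_or_neg_mem_pos (apply_mem_roots hw (R.pos_subset hmem)) with hpos | hneg'
  · have hwγ : w γ = w (sRefl (R.simple i) γ) + ⟪γ, coroot (R.simple i)⟫ • w (R.simple i) := by
      rw [← map_smul_of_mem_weyl hw, ← map_add_of_mem_weyl hw, sRefl, sub_add_cancel]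
    have hci := hsimple i (R.neg_mem_pos_of_neg_add_smul_mem_pos hpos
      (apply_mem_roots hw (R.simple_mem_roots i)) (by linarith) (hwγ ▸ hneg))
    nlinarith
  · have := ih hneg'
    nlinarith

lemma eq_of_apply_eq_of_isDominant {w₁ w₂ : V → V} (hw₁ : w₁ ∈ R.weyl) (hw₂ : w₂ ∈ R.weyl)
    {x : V} (hx : R.IsDominant x) (h : w₁ x = w₂ x)
    (h₁ : ∀ γ ∈ R.pos, -w₁ γ ∈ R.pos → ⟪x, coroot γ⟫ ≠ 0)
    (h₂ : ∀ γ ∈ R.pos, -w₂ γ ∈ R.pos → ⟪x, coroot γ⟫ ≠ 0) : w₁ = w₂ := by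
  obtain ⟨u, hu, hw₁u, hu₁⟩ := exists_inverse_mem_weyl hw₁
  have hv : u ∘ w₂ ∈ R.weyl := comp_mem_weyl hu hw₂
  have hid : u ∘ w₂ = id := by
    refine R.eq_id_of_forall_simple_mem_pos hv fun j => ?_
    refine (R.mem_pos_or_neg_mem_pos (apply_mem_roots hv (R.simple_mem_roots j))).resolve_right
      fun hneg => ?_
    have hpair := inner_map_coroot_map_of_mem_weyl hv x (R.simple j)
    simp only [Function.comp_apply, ← h, hu₁] at hpair hneg
    have h0 : ⟪x, coroot (R.simple j)⟫ = 0 := by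
      refine le_antisymm ?_ (hx j)
      have := inner_coroot_nonneg_of_isDominant hx hneg
      rwa [coroot_neg, inner_neg_right, hpair, neg_nonneg] at this
    have hw₂j : w₂ (R.simple j) ∈ R.pos :=
      (R.mem_pos_or_neg_mem_pos (apply_mem_roots hw₂ (R.simple_mem_roots j))).resolve_right
        fun hn => h₂ _ (R.simple_mem j) hn h0
    refine h₁ _ hneg (by rwa [map_neg_of_mem_weyl hw₁, hw₁u, neg_neg]) ?_
    rw [coroot_neg, inner_neg_right, hpair, h0, neg_zero]
  funext y
  calc w₁ y = w₁ ((u ∘ w₂) y) := by rw [hid, id]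
    _ = w₂ y := hw₁u _

lemma inner_coroot_apply_ne_neg_one {w : V → V} (hw : w ∈ R.weyl) {x : V}
    (hx : R.IsDominant x) (hinv : ∀ γ ∈ R.pos, -w γ ∈ R.pos → 2 ≤ ⟪x, coroot γ⟫)
    {α : V} (hα : α ∈ R.pos) : ⟪w x, coroot α⟫ ≠ -1 := by
  obtain ⟨β, hβ, rfl⟩ := exists_apply_eq_of_mem_roots hw (R.pos_subset hα)
  rw [inner_map_coroot_map_of_mem_weyl hw]
  rcases R.mem_pos_or_neg_mem_pos hβ with hpos | hneg
  · linarith [inner_coroot_nonneg_of_isDominant hx hpos]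
  · have := hinv _ hneg (by rwa [map_neg_of_mem_weyl hw, neg_neg])
    rw [coroot_neg, inner_neg_right] at this
    linarith

lemma two_le_inner_coroot_of_minimal {w : V → V} (hw : w ∈ R.weyl) {x : V}
    (hxP : x ∈ R.weightLattice) (hx : R.IsDominant x) {μ : V} (hwx : w x = μ)
    (hmin : ∀ w' ∈ R.weyl, w' x = μ → R.coxLen w ≤ R.coxLen w')
    (hne : ∀ α ∈ R.pos, ⟪μ, coroot α⟫ ≠ -1) :
    ∀ γ ∈ R.pos, -w γ ∈ R.pos → 2 ≤ ⟪x, coroot γ⟫ := by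
  subst hwx
  refine le_inner_coroot_of_inversion hw hx fun j hj => ?_
  have h0 := inner_coroot_simple_ne_zero_of_minimal hw hmin hj
  have h1 := hne _ hj
  rw [coroot_neg, inner_neg_right, inner_map_coroot_map_of_mem_weyl hw] at h1
  have hnn := hx j
  obtain ⟨m, hm⟩ := hxP _ (R.simple_mem_roots j)
  rw [hm] at h0 h1 hnn ⊢
  have : (0 : ℤ) ≤ m := by exact_mod_cast hnn
  have : m ≠ 0 := by exact_mod_cast h0
  have : m ≠ 1 := fun h => h1 (by rw [h]; norm_num)
  have : (2 : ℤ) ≤ m := by omega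
  exact_mod_cast this

lemma apply_mem_weightLattice {w : V → V} (hw : w ∈ R.weyl) {x : V}
    (hx : x ∈ R.weightLattice) : w x ∈ R.weightLattice := by
  intro α hα
  obtain ⟨β, hβ, rfl⟩ := exists_apply_eq_of_mem_roots hw hα
  rw [inner_map_coroot_map_of_mem_weyl hw]
  exact hx β hβ

lemma sub_mem_weightLattice {x y : V} (hx : x ∈ R.weightLattice)
    (hy : y ∈ R.weightLattice) : x - y ∈ R.weightLattice := by
  intro α hα
  obtain ⟨m, hm⟩ := hx α hα
  obtain ⟨m', hm'⟩ := hy α hα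
  exact ⟨m - m', by rw [inner_sub_left, hm, hm', Int.cast_sub]⟩

variable (R) in
lemma mem_weightLattice_of_simple {x : V}
    (h : ∀ i, ∃ m : ℤ, ⟪x, coroot (R.simple i)⟫ = m) : x ∈ R.weightLattice := by
  have hpos : ∀ γ ∈ R.pos, ∃ m : ℤ, ⟪x, coroot γ⟫ = m := by
    refine R.pos_induction _ h fun γ _ i _ hmem ⟨m, hm⟩ => ?_
    obtain ⟨t, ht⟩ := R.crystallographic _ (R.pos_subset hmem) _ (R.simple_mem_roots i)
    obtain ⟨m', hm'⟩ := h i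
    refine ⟨m - t * m', ?_⟩
    rw [← sRefl_sRefl (R.simple i) γ, inner_coroot_sRefl, hm, ht, hm']
    push_cast
    ring
  intro α hα
  rcases R.mem_pos_or_neg_mem_pos hα with hα' | hα'
  · exact hpos α hα'
  · obtain ⟨m, hm⟩ := hpos _ hα'
    exact ⟨-m, by rw [Int.cast_neg, ← hm, coroot_neg, inner_neg_right, neg_neg]⟩

lemma IsWInvariant.apply_neg {k : V → ℕ} (hk : R.IsWInvariant k) {β : V}
    (hβ : β ∈ R.roots) : k (-β) = k β := by
  rw [← sRefl_self (R.ne_zero_of_mem_roots hβ)]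
  exact hk _ (R.sRefl_mem_weyl hβ) β hβ

variable (R) in
def rhoK (fw : Fin R.n → V) (k : V → ℕ) : V := ∑ i, (k (R.simple i) : ℝ) • fw i

lemma inner_rhoK_coroot_simple {fw : Fin R.n → V}
    (hfw : ∀ i j, ⟪fw i, coroot (R.simple j)⟫ = if i = j then (1 : ℝ) else 0) (k : V → ℕ)
    (j : Fin R.n) : ⟪R.rhoK fw k, coroot (R.simple j)⟫ = k (R.simple j) := by
  simp [rhoK, sum_inner, real_inner_smul_left, hfw]

lemma rhoK_mem_weightLattice {fw : Fin R.n → V}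
    (hfw : ∀ i j, ⟪fw i, coroot (R.simple j)⟫ = if i = j then (1 : ℝ) else 0) (k : V → ℕ) :
    R.rhoK fw k ∈ R.weightLattice :=
  R.mem_weightLattice_of_simple fun i =>
    ⟨k (R.simple i), by rw [inner_rhoK_coroot_simple hfw, Int.cast_natCast]⟩

lemma le_inner_rhoK_coroot {fw : Fin R.n → V}
    (hfw : ∀ i j, ⟪fw i, coroot (R.simple j)⟫ = if i = j then (1 : ℝ) else 0) {k : V → ℕ}
    (hk : R.IsWInvariant k) {γ : V} (hγ : γ ∈ R.pos) :
    (k γ : ℝ) ≤ ⟪R.rhoK fw k, coroot γ⟫ := by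
  refine R.pos_induction (fun γ => (k γ : ℝ) ≤ ⟪R.rhoK fw k, coroot γ⟫)
    (fun i => (inner_rhoK_coroot_simple hfw k i).ge) (fun γ hγ i hi hmem ih => ?_) γ hγ
  have ht := R.inner_simple_coroot_sRefl_le_neg_one (R.pos_subset hγ) (by linarith)
  have hkγ : k (sRefl (R.simple i) γ) = k γ :=
    hk _ (R.sRefl_mem_weyl (R.simple_mem_roots i)) γ (R.pos_subset hγ)
  rw [← sRefl_sRefl (R.simple i) γ, inner_coroot_sRefl, sRefl_sRefl,
    inner_rhoK_coroot_simple hfw]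
  rw [hkγ] at ih
  have : (0 : ℝ) ≤ k (R.simple i) := Nat.cast_nonneg _
  nlinarith

lemma mem_weightLattice_of_mem_orbit {x y : V} (h : y ∈ R.orbit x)
    (hx : x ∈ R.weightLattice) : y ∈ R.weightLattice := by
  obtain ⟨w, hw, rfl⟩ := h
  exact apply_mem_weightLattice hw hx

lemma eq_of_minimal_of_two_le_inner_coroot {w w' : V → V} (hw : w ∈ R.weyl)
    (hw' : w' ∈ R.weyl) {x x' : V} (hxP : x ∈ R.weightLattice) (hx : R.IsDominant x)
    (hinv : ∀ γ ∈ R.pos, -w γ ∈ R.pos → 2 ≤ ⟪x, coroot γ⟫) (hx' : R.IsDominant x')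
    (hx'orb : x' ∈ R.orbit (w x)) (hw'x' : w' x' = w x)
    (hmin' : ∀ v ∈ R.weyl, v x' = w x → R.coxLen w' ≤ R.coxLen v) : w' = w := by
  obtain ⟨u, hu, rfl⟩ := hx'orb
  have hux : u (w x) = x := apply_eq_self_of_isDominant (comp_mem_weyl hu hw) hx hx'
  rw [hux] at hx' hw'x' hmin'
  have hinv' := two_le_inner_coroot_of_minimal hw' hxP hx hw'x' hmin'
    fun α hα => inner_coroot_apply_ne_neg_one hw hx hinv hα
  refine eq_of_apply_eq_of_isDominant hw' hw hx hw'x' (fun γ hγ hγ' => ?_) fun γ hγ hγ' => ?_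
  · linarith [hinv' γ hγ hγ']
  · linarith [hinv γ hγ hγ']

variable {k : V → ℕ}

lemma not_symFire_apply_add_apply (hk : R.IsWInvariant k) {ρ : V}
    (hρ : ∀ γ ∈ R.pos, (k γ : ℝ) ≤ ⟪ρ, coroot γ⟫) {w : V → V} (hw : w ∈ R.weyl) {x : V}
    (hx : R.IsDominant x) (hinv : ∀ γ ∈ R.pos, -w γ ∈ R.pos → 2 ≤ ⟪x, coroot γ⟫) (ν : V) :
    ¬ R.symFire k (w x + w ρ) ν := by
  rintro ⟨-, α, hα, -, hlow, hhigh⟩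
  obtain ⟨β, hβ, rfl⟩ := exists_apply_eq_of_mem_roots hw (R.pos_subset hα)
  rw [← map_add_of_mem_weyl hw, inner_map_coroot_map_of_mem_weyl hw, inner_add_left,
    hk w hw β hβ] at hlow hhigh
  rcases R.mem_pos_or_neg_mem_pos hβ with hpos | hneg
  · linarith [inner_coroot_nonneg_of_isDominant hx hpos, hρ β hpos]
  · have h2 := hinv _ hneg (by rwa [map_neg_of_mem_weyl hw, neg_neg])
    have hkρ := hρ _ hneg
    rw [hk.apply_neg hβ, coroot_neg, inner_neg_right] at hkρ
    rw [coroot_neg, inner_neg_right] at h2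
    linarith

lemma lt_or_lt_of_not_symFire {μ : V} (hμ : μ ∈ R.weightLattice)
    (hsink : ¬ ∃ ν, R.symFire k μ ν) {α : V} (hα : α ∈ R.pos) :
    ⟪μ, coroot α⟫ + 1 < -(k α : ℝ) ∨ (k α : ℝ) < ⟪μ, coroot α⟫ + 1 := by
  by_contra h
  push Not at h
  exact hsink ⟨μ + α, hμ, α, hα, rfl, h.1, h.2⟩

lemma isDominant_sub_rhoK_and_two_le_of_not_symFire {fw : Fin R.n → V}
    (hfw : ∀ i j, ⟪fw i, coroot (R.simple j)⟫ = if i = j then (1 : ℝ) else 0)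
    (hk : R.IsWInvariant k) {w : V → V} (hw : w ∈ R.weyl) {x : V}
    (hxP : x ∈ R.weightLattice) (hx : R.IsDominant x)
    {μ : V} (hwx : w x = μ) (hmin : ∀ w' ∈ R.weyl, w' x = μ → R.coxLen w ≤ R.coxLen w')
    (hμ : μ ∈ R.weightLattice) (hsink : ¬ ∃ ν, R.symFire k μ ν) :
    R.IsDominant (x - R.rhoK fw k) ∧
      ∀ γ ∈ R.pos, -w γ ∈ R.pos → 2 ≤ ⟪x - R.rhoK fw k, coroot γ⟫ := by
  subst hwx
  have hsimple (j : Fin R.n) : 0 ≤ ⟪x - R.rhoK fw k, coroot (R.simple j)⟫ ∧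
      (-w (R.simple j) ∈ R.pos → 2 ≤ ⟪x - R.rhoK fw k, coroot (R.simple j)⟫) := by
    have hj := R.simple_mem_roots j
    rw [inner_sub_left, inner_rhoK_coroot_simple hfw]
    obtain ⟨m, hm⟩ := hxP _ hj
    have hm0 : (0 : ℤ) ≤ m := by exact_mod_cast hm ▸ hx j
    rw [hm]
    rcases R.mem_pos_or_neg_mem_pos (apply_mem_roots hw hj) with hpos | hneg
    · have h := lt_or_lt_of_not_symFire hμ hsink hpos
      rw [inner_map_coroot_map_of_mem_weyl hw, hk w hw _ hj, hm] at h
      have h' : m + 1 < -(k (R.simple j) : ℤ) ∨ (k (R.simple j) : ℤ) < m + 1 := by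
        exact_mod_cast h
      have : ((k (R.simple j) : ℤ) : ℝ) ≤ m := Int.cast_le.2 (by omega)
      push_cast at this
      exact ⟨by linarith, fun hneg => absurd hneg (R.neg_notMem_pos hpos)⟩
    · have h := lt_or_lt_of_not_symFire hμ hsink hneg
      rw [coroot_neg, inner_neg_right, inner_map_coroot_map_of_mem_weyl hw,
        hk.apply_neg (apply_mem_roots hw hj), hk w hw _ hj, hm] at h
      have h0 := inner_coroot_simple_ne_zero_of_minimal hw hmin hneg
      rw [hm, Int.cast_ne_zero] at h0
      have h' : -m + 1 < -(k (R.simple j) : ℤ) ∨ (k (R.simple j) : ℤ) < -m + 1 := by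
        exact_mod_cast h
      have : ((k (R.simple j) + 2 : ℤ) : ℝ) ≤ m := Int.cast_le.2 (by omega)
      push_cast at this
      exact ⟨by linarith, fun _ => by linarith⟩
  exact ⟨fun j => (hsimple j).1,
    le_inner_coroot_of_inversion hw (fun j => (hsimple j).1) fun j => (hsimple j).2⟩

end RootSystemData

open RootSystemData

/-- The sinks of symmetric interval-firing are exactly the `η_𝐤(λ)` for weights
`λ` with `⟨λ,α∨⟩ ≠ −1` for all positive roots `α`. -/
theorem statement5 (R : RootSystemData V)
    (fw : Fin R.n → V)
    (hfw : ∀ i j, ⟪fw i, coroot (R.simple j)⟫ = if i = j then (1 : ℝ) else 0)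
    (dm : V → V)
    (hdm : ∀ lam ∈ R.weightLattice, dm lam ∈ R.orbit lam ∧ R.IsDominant (dm lam))
    (wl : V → V → V)
    (hwl : ∀ lam ∈ R.weightLattice, wl lam ∈ R.weyl ∧ wl lam (dm lam) = lam ∧
      ∀ w ∈ R.weyl, w (dm lam) = lam → R.coxLen (wl lam) ≤ R.coxLen w)
    (k : V → ℕ) (hk : R.IsWInvariant k) (mu : V) (hmu : mu ∈ R.weightLattice) :
    (¬ ∃ ν, R.symFire k mu ν) ↔
      ∃ lam ∈ R.weightLattice, (∀ α ∈ R.pos, ⟪lam, coroot α⟫ ≠ -1) ∧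
        mu = etaMap R fw wl k lam := by
  constructor
  · intro hsink
    obtain ⟨hδorb, hδ⟩ := hdm mu hmu
    obtain ⟨hw, hwδ, hmin⟩ := hwl mu hmu
    have hδP := mem_weightLattice_of_mem_orbit hδorb hmu
    obtain ⟨hdom, hinv⟩ :=
      isDominant_sub_rhoK_and_two_le_of_not_symFire hfw hk hw hδP hδ hwδ hmin hmu hsink
    have hP := sub_mem_weightLattice hδP (rhoK_mem_weightLattice hfw k)
    have hlamP := apply_mem_weightLattice hw hP
    obtain ⟨hδorb', hδ'⟩ := hdm _ hlamP
    obtain ⟨hw', hwδ', hmin'⟩ := hwl _ hlamP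
    refine ⟨_, hlamP, fun α hα => inner_coroot_apply_ne_neg_one hw hdom hinv hα, ?_⟩
    rw [etaMap, eq_of_minimal_of_two_le_inner_coroot hw hw' hP hdom hinv hδ' hδorb' hwδ' hmin',
      ← rhoK, ← map_add_of_mem_weyl hw, sub_add_cancel, hwδ]
  · rintro ⟨lam, hlamP, hne, rfl⟩ ⟨ν, hν⟩
    obtain ⟨hδorb, hδ⟩ := hdm lam hlamP
    obtain ⟨hw, hwδ, hmin⟩ := hwl lam hlamP
    have hinv := two_le_inner_coroot_of_minimal hw (mem_weightLattice_of_mem_orbit hδorb hlamP)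
      hδ hwδ hmin hne
    refine not_symFire_apply_add_apply hk (fun γ => le_inner_rhoK_coroot hfw hk) hw hδ hinv ν ?_
    rw [hwδ]
    exact hν
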